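/- Let G₁ and G₂ be connected graphs with distinguished vertices w₁ ∈ V(G₁) and v₂ ∈ V(G₂), each with the property that every longest path of G_i has prescribed endpoints v_i, w_i. Let G be obtained from the disjoint union of G₁ and G₂ by identifying w₁ with v₂. Then λ(G) = λ(G₁) + λ(G₂), and every longest path of G has endpoints v₁ and w₂. -/

import Mathlib

/-- The set of lengths (numbers of edges) of simple paths in `G`. -/
def pathLengths {V : Type*} (G : SimpleGraph V) : Set ℕ :=
  {n | ∃ (a b : V) (p : G.Walk a b), p.IsPath ∧ p.length = n}

/-- `p` is a longest path of `G`: a path whose length is maximal among all paths of `G`. -/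
def IsLongestPath {V : Type*} (G : SimpleGraph V) {a b : V} (p : G.Walk a b) : Prop :=
  p.IsPath ∧ ∀ n ∈ pathLengths G, n ≤ p.length

/-- `v` is a Gallai vertex of `G`: it lies on every longest path. -/
def GallaiVertex {V : Type*} (G : SimpleGraph V) (v : V) : Prop :=
  ∀ (a b : V) (p : G.Walk a b), IsLongestPath G p → v ∈ p.support

/-- Relation generating the graph obtained from `H` by attaching a pendant path of
length `k` at the vertex `x` (the pendant vertices are `Sum.inr 0, …, Sum.inr (k-1)`). -/
def pendantRel {V : Type*} (H : SimpleGraph V) (x : V) (k : ℕ) :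
    V ⊕ Fin k → V ⊕ Fin k → Prop
  | Sum.inl a, Sum.inl b => H.Adj a b
  | Sum.inl a, Sum.inr i => a = x ∧ i.val = 0
  | Sum.inr i, Sum.inr j => i.val + 1 = j.val
  | _, _ => False

/-- The graph obtained from `H` by attaching a pendant path of length `k` at `x`. -/
def pendantGraph {V : Type*} (H : SimpleGraph V) (x : V) (k : ℕ) :
    SimpleGraph (V ⊕ Fin k) :=
  SimpleGraph.fromRel (pendantRel H x k)

/-!
A path of `G` passes through the cut vertex `c` at most once, so it is a path in `A` followed by
a path in `B` (or the reverse). Its length is therefore at most `l₁ + l₂`, and equality forces both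
pieces to be longest paths, whose ends are `v₁, c` and `c, w₂`. Concatenating a longest path of
`A` from `v₁` to `c` with one of `B` from `c` to `w₂` attains the bound.
-/

namespace SimpleGraph

variable {V : Type} {G : SimpleGraph V}

def Subgraph.LongestPathsBetween (H : G.Subgraph) (l : ℕ) (x y : V) : Prop :=
  IsGreatest (pathLengths H.coe) l ∧ ∀ (a b : H.verts) (p : H.coe.Walk a b),
    IsLongestPath H.coe p → ({(a : V), (b : V)} : Set V) = {x, y}

namespace Subgraph.LongestPathsBetween

variable {H : G.Subgraph} {l : ℕ} {x y : V}

theorem exists_isPath (hH : H.LongestPathsBetween l x y) :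
    ∃ p : G.Walk x y, p.IsPath ∧ p.length = l ∧ ∀ z ∈ p.support, z ∈ H.verts := by
  obtain ⟨a, b, q, hq, rfl⟩ := hH.1.1
  have hq' : (q.map H.hom).IsPath := hq.map Subgraph.hom_injective
  have hsupp : ∀ z ∈ (q.map H.hom).support, z ∈ H.verts := by
    intro z hz
    obtain ⟨t, -, rfl⟩ := List.mem_map.1 (Walk.support_map H.hom q ▸ hz)
    exact t.2
  rcases Set.pair_eq_pair_iff.1 (hH.2 a b q ⟨hq, hH.1.2⟩) with ⟨rfl, rfl⟩ | ⟨rfl, rfl⟩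
  · exact ⟨q.map H.hom, hq', Walk.length_map .., hsupp⟩
  · exact ⟨(q.map H.hom).reverse, hq'.reverse, (Walk.length_reverse _).trans (Walk.length_map ..),
      fun z hz => hsupp z (List.mem_reverse.1 (Walk.support_reverse _ ▸ hz))⟩

theorem length_ne_zero (hH : H.LongestPathsBetween l x y) (hxy : x ≠ y) : l ≠ 0 := by
  obtain ⟨p, -, rfl, -⟩ := hH.exists_isPath
  exact fun h => hxy (Walk.eq_of_length_eq_zero h)

end Subgraph.LongestPathsBetween

namespace Walk

variable {u v w : V}

theorem IsPath.append {p : G.Walk u v} {q : G.Walk v w} (hp : p.IsPath) (hq : q.IsPath)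
    (h : ∀ x ∈ p.support, x ∈ q.support → x = v) : (p.append q).IsPath := by
  have hq' := hq.support_nodup
  rw [← cons_tail_support, List.nodup_cons] at hq'
  rw [isPath_def, support_append, List.nodup_append]
  refine ⟨hp.support_nodup, hq'.2, fun x hx y hy hxy => ?_⟩
  subst hxy
  exact hq'.1 (h x hx (List.mem_of_mem_tail hy) ▸ hy)

section Subgraph

variable {H : G.Subgraph} {l : ℕ} {x y : V}

theorem IsPath.exists_coe_isPath {p : G.Walk u v} (hp : p.IsPath)
    (hnil : ¬p.Nil) (hH : p.edgeSet ⊆ H.edgeSet) :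
    ∃ (hu : u ∈ H.verts) (hv : v ∈ H.verts) (q : H.coe.Walk ⟨u, hu⟩ ⟨v, hv⟩),
      q.IsPath ∧ q.length = p.length := by
  have hle := (toSubgraph_le_iff hnil).2 hH
  have hp' : p.mapToSubgraph.IsPath :=
    .of_map (f := p.toSubgraph.hom) (by rwa [map_mapToSubgraph_hom])
  exact ⟨hle.1 p.start_mem_verts_toSubgraph, hle.1 p.end_mem_verts_toSubgraph,
    p.mapToSubgraph.map (Subgraph.inclusion hle),
    hp'.map (Subgraph.inclusion.injective hle),
    (length_map ..).trans (by rw [← length_map p.toSubgraph.hom, map_mapToSubgraph_hom]; rfl)⟩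

theorem IsPath.length_le_of_edgeSet_subset {p : G.Walk u v} (hp : p.IsPath)
    (hl : IsGreatest (pathLengths H.coe) l) (hH : p.edgeSet ⊆ H.edgeSet) : p.length ≤ l := by
  by_cases hnil : p.Nil
  · simp [hnil.length_eq_zero]
  obtain ⟨_, _, q, hq, hlen⟩ := hp.exists_coe_isPath hnil hH
  exact hlen ▸ hl.2 ⟨_, _, q, hq, rfl⟩

theorem IsPath.ends_of_length_eq {p : G.Walk u v} (hp : p.IsPath)
    (hH : H.LongestPathsBetween l x y) (hpH : p.edgeSet ⊆ H.edgeSet) (hlen : p.length = l)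
    (hl : l ≠ 0) : u ∈ H.verts ∧ v ∈ H.verts ∧ ({u, v} : Set V) = {x, y} := by
  obtain ⟨hu, hv, q, hq, hqlen⟩ :=
    hp.exists_coe_isPath (by simpa [← length_eq_zero_iff, hlen] using hl) hpH
  exact ⟨hu, hv, hH.2 _ _ q ⟨hq, fun n hn => hqlen ▸ hlen ▸ hH.1.2 hn⟩⟩

end Subgraph

section CutVertex

variable {A B : G.Subgraph} {c : V}

theorem IsPath.exists_append_cons_edgeSet_subset (hsep : A.verts ∩ B.verts ⊆ {c})
    {a a' m b : V} (h : G.Adj a a') (q₁ : G.Walk a' m) (q₂ : G.Walk m b)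
    (hp : (cons h (q₁.append q₂)).IsPath) (he : s(a, a') ∈ A.edgeSet ∪ B.edgeSet)
    (h₁ : q₁.edgeSet ⊆ A.edgeSet) (h₂ : q₂.edgeSet ⊆ B.edgeSet) :
    ∃ (m' : V) (p₁ : G.Walk a m') (p₂ : G.Walk m' b), cons h (q₁.append q₂) = p₁.append p₂ ∧
      (p₁.edgeSet ⊆ A.edgeSet ∧ p₂.edgeSet ⊆ B.edgeSet ∨
        p₁.edgeSet ⊆ B.edgeSet ∧ p₂.edgeSet ⊆ A.edgeSet) := by
  rcases he with heA | heB
  · refine ⟨m, cons h q₁, q₂, rfl, .inl ⟨?_, h₂⟩⟩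
    simpa [edgeSet_cons, Set.insert_subset_iff] using ⟨heA, h₁⟩
  by_cases hq₁ : q₁.Nil
  · obtain rfl := hq₁.eq
    obtain rfl := hq₁.eq_nil
    refine ⟨b, cons h q₂, Walk.nil, (append_nil _).symm, .inr ⟨?_, by simp⟩⟩
    simpa [edgeSet_cons, Set.insert_subset_iff] using ⟨heB, h₂⟩
  -- `aa'` lies in `B` and `q₁` in `A`, so they meet at the cut vertex; if `q₂` is not nil either,
  -- `q₁` also ends at `c`, which a nontrivial path cannot do.
  have ha' : a' = c := hsep ⟨((toSubgraph_le_iff hq₁).2 h₁).1 q₁.start_mem_verts_toSubgraph,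
    B.mem_verts_of_mem_edge heB (Sym2.mem_mk_right a a')⟩
  by_cases hq₂ : q₂.Nil
  · obtain rfl := hq₂.eq
    obtain rfl := hq₂.eq_nil
    exact ⟨a', cons h Walk.nil, q₁, by simp, .inr ⟨by simpa [edgeSet_cons] using heB, h₁⟩⟩
  have hm : m = c := hsep ⟨((toSubgraph_le_iff hq₁).2 h₁).1 q₁.end_mem_verts_toSubgraph,
    ((toSubgraph_le_iff hq₂).2 h₂).1 q₂.start_mem_verts_toSubgraph⟩
  subst ha' hm
  exact (hq₁ (isPath_iff_nil.1 hp.of_cons.of_append_left)).elim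

theorem IsPath.exists_append_edgeSet_subset (hsep : A.verts ∩ B.verts ⊆ {c})
    {p : G.Walk u v} (hp : p.IsPath) (hcover : p.edgeSet ⊆ A.edgeSet ∪ B.edgeSet) :
    ∃ (m : V) (p₁ : G.Walk u m) (p₂ : G.Walk m v), p = p₁.append p₂ ∧
      (p₁.edgeSet ⊆ A.edgeSet ∧ p₂.edgeSet ⊆ B.edgeSet ∨
        p₁.edgeSet ⊆ B.edgeSet ∧ p₂.edgeSet ⊆ A.edgeSet) := by
  induction p with
  | nil => exact ⟨_, Walk.nil, Walk.nil, rfl, .inl ⟨by simp, by simp⟩⟩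
  | @cons a a' b h q ih =>
    rw [edgeSet_cons, Set.insert_subset_iff] at hcover
    obtain ⟨m, q₁, q₂, rfl, ⟨h₁, h₂⟩ | ⟨h₁, h₂⟩⟩ := ih hp.of_cons hcover.2
    · exact hp.exists_append_cons_edgeSet_subset hsep h q₁ q₂ hcover.1 h₁ h₂
    · obtain ⟨m', p₁, p₂, hpq, hsides⟩ := hp.exists_append_cons_edgeSet_subset
        (by rwa [Set.inter_comm]) h q₁ q₂ (Set.union_comm _ _ ▸ hcover.1) h₁ h₂
      exact ⟨m', p₁, p₂, hpq, hsides.symm⟩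

end CutVertex

section Gluing

variable {A B : G.Subgraph} {c v₁ w₂ : V} {l₁ l₂ : ℕ}

theorem IsPath.length_append_le_and_ends (hsep : A.verts ∩ B.verts ⊆ {c})
    (hA : A.LongestPathsBetween l₁ v₁ c) (hB : B.LongestPathsBetween l₂ c w₂)
    (hv₁c : v₁ ≠ c) (hcw₂ : c ≠ w₂) {p₁ : G.Walk u v} {p₂ : G.Walk v w}
    (hp : (p₁.append p₂).IsPath) (h₁ : p₁.edgeSet ⊆ A.edgeSet) (h₂ : p₂.edgeSet ⊆ B.edgeSet) :
    (p₁.append p₂).length ≤ l₁ + l₂ ∧ ((p₁.append p₂).length = l₁ + l₂ → u = v₁ ∧ w = w₂) := by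
  have hle₁ := hp.of_append_left.length_le_of_edgeSet_subset hA.1 h₁
  have hle₂ := hp.of_append_right.length_le_of_edgeSet_subset hB.1 h₂
  rw [length_append]
  refine ⟨by omega, fun hlen => ?_⟩
  obtain ⟨-, hvA, hends₁⟩ :=
    hp.of_append_left.ends_of_length_eq hA h₁ (by omega) (hA.length_ne_zero hv₁c)
  obtain ⟨hvB, -, hends₂⟩ :=
    hp.of_append_right.ends_of_length_eq hB h₂ (by omega) (hB.length_ne_zero hcw₂)
  obtain rfl : v = c := hsep ⟨hvA, hvB⟩
  exact ⟨(Set.pair_eq_pair_iff.1 hends₁).resolve_right (fun h => hv₁c h.2.symm) |>.1,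
    (Set.pair_eq_pair_iff.1 hends₂).resolve_right (fun h => hcw₂ h.1) |>.2⟩

theorem IsPath.length_le_and_ends (hsep : A.verts ∩ B.verts ⊆ {c})
    (hA : A.LongestPathsBetween l₁ v₁ c) (hB : B.LongestPathsBetween l₂ c w₂)
    (hv₁c : v₁ ≠ c) (hcw₂ : c ≠ w₂) {p : G.Walk u w} (hp : p.IsPath)
    (hcover : p.edgeSet ⊆ A.edgeSet ∪ B.edgeSet) :
    p.length ≤ l₁ + l₂ ∧ (p.length = l₁ + l₂ → ({u, w} : Set V) = {v₁, w₂}) := by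
  obtain ⟨m, p₁, p₂, rfl, ⟨h₁, h₂⟩ | ⟨h₁, h₂⟩⟩ := hp.exists_append_edgeSet_subset hsep hcover
  · obtain ⟨hle, hends⟩ := hp.length_append_le_and_ends hsep hA hB hv₁c hcw₂ h₁ h₂
    exact ⟨hle, fun hlen => by rw [(hends hlen).1, (hends hlen).2]⟩
  · have hrev : (p₂.reverse.append p₁.reverse).IsPath := by
      rw [← reverse_append]
      exact hp.reverse
    obtain ⟨hle, hends⟩ := hrev.length_append_le_and_ends hsep hA hB hv₁c hcw₂
      (by rwa [edgeSet_reverse]) (by rwa [edgeSet_reverse])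
    rw [← reverse_append, length_reverse] at hle hends
    exact ⟨hle, fun hlen => by rw [(hends hlen).1, (hends hlen).2, Set.pair_comm]⟩

end Gluing

end Walk

end SimpleGraph

theorem stmt_10_general {V : Type} (G : SimpleGraph V) (c v1 w2 : V)
    (A B : G.Subgraph) (hAB : A ⊔ B = ⊤) (hI : A.verts ∩ B.verts = {c})
    (hv1c : v1 ≠ c) (hcw2 : c ≠ w2)
    (l1 l2 : ℕ) (hl1 : IsGreatest (pathLengths A.coe) l1)
    (hl2 : IsGreatest (pathLengths B.coe) l2)
    (hA : ∀ (a b : A.verts) (p : A.coe.Walk a b), IsLongestPath A.coe p →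
      ({(a : V), (b : V)} : Set V) = {v1, c})
    (hB : ∀ (a b : B.verts) (p : B.coe.Walk a b), IsLongestPath B.coe p →
      ({(a : V), (b : V)} : Set V) = {c, w2}) :
    IsGreatest (pathLengths G) (l1 + l2) ∧
    ∀ (a b : V) (p : G.Walk a b), IsLongestPath G p → ({a, b} : Set V) = {v1, w2} := by
  have hsep : A.verts ∩ B.verts ⊆ {c} := hI.le
  have hA' : A.LongestPathsBetween l1 v1 c := ⟨hl1, hA⟩
  have hB' : B.LongestPathsBetween l2 c w2 := ⟨hl2, hB⟩
  have hbound {a b : V} (p : G.Walk a b) (hp : p.IsPath) :=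
    hp.length_le_and_ends hsep hA' hB' hv1c hcw2 fun e he => by
      rw [← SimpleGraph.Subgraph.edgeSet_sup, hAB]
      exact p.edges_subset_edgeSet he
  obtain ⟨P₁, hP₁, hP₁l, hP₁A⟩ := hA'.exists_isPath
  obtain ⟨P₂, hP₂, hP₂l, hP₂B⟩ := hB'.exists_isPath
  have hmem : l1 + l2 ∈ pathLengths G :=
    ⟨v1, w2, P₁.append P₂, hP₁.append hP₂ fun x hx₁ hx₂ => hsep ⟨hP₁A x hx₁, hP₂B x hx₂⟩,
      by rw [SimpleGraph.Walk.length_append, hP₁l, hP₂l]⟩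
  refine ⟨⟨hmem, ?_⟩, fun a b p ⟨hp, hmax⟩ => ?_⟩
  · rintro n ⟨a, b, p, hp, rfl⟩
    exact (hbound p hp).1
  · exact (hbound p hp).2 ((hbound p hp).1.antisymm (hmax _ hmem))

/-- Gluing two connected graphs `G₁` (inside `A`) and `G₂` (inside `B`) at a single
vertex `c` (i.e. `w₁ = v₂ = c`): if every longest path of `A` has endpoints `{v₁, c}` and
every longest path of `B` has endpoints `{c, w₂}`, then `λ(G) = λ(G₁) + λ(G₂)` and every
longest path of `G` has endpoints `v₁` and `w₂`. -/
theorem stmt_10 {V : Type} [Fintype V] (G : SimpleGraph V) (c v1 w2 : V)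
    (A B : G.Subgraph) (hAB : A ⊔ B = ⊤) (hI : A.verts ∩ B.verts = {c})
    (hv1 : v1 ∈ A.verts) (hw2 : w2 ∈ B.verts) (hv1c : v1 ≠ c) (hcw2 : c ≠ w2)
    (hAconn : A.coe.Connected) (hBconn : B.coe.Connected)
    (l1 l2 : ℕ) (hl1 : IsGreatest (pathLengths A.coe) l1)
    (hl2 : IsGreatest (pathLengths B.coe) l2)
    (hA : ∀ (a b : A.verts) (p : A.coe.Walk a b), IsLongestPath A.coe p →
      ({(a : V), (b : V)} : Set V) = {v1, c})
    (hB : ∀ (a b : B.verts) (p : B.coe.Walk a b), IsLongestPath B.coe p →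
      ({(a : V), (b : V)} : Set V) = {c, w2}) :
    IsGreatest (pathLengths G) (l1 + l2) ∧
    ∀ (a b : V) (p : G.Walk a b), IsLongestPath G p → ({a, b} : Set V) = {v1, w2} :=
  stmt_10_general G c v1 w2 A B hAB hI hv1c hcw2 l1 l2 hl1 hl2 hA hB
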